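/- Let G be a profinite group and let EG be the simplicial profinite set whose space of n-simplices is G^{n+1}, namely the Čech nerve in Profinite of the unique map from G to the terminal object. Then the unique map EG → * to the terminal simplicial profinite set has the right lifting property with respect to all monomorphisms of simplicial profinite sets. -/

import Mathlib

/-!
A map `B → EG` is determined by its restriction `B₀ → G` to vertices, and any map `B₀ → G`
arises this way, so lifting against `j` amounts to extending a continuous map `A₀ → G` along
the continuous injection `A₀ → B₀` of profinite spaces.

Profinite groups admit such extensions. By Zorn's lemma there is a minimal closed relation
`Γ ⊆ B × G` containing the graph of `f` along `j` whose fibres are left cosets of a single closed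
subgroup `N`. If `N ≠ 1`, pick an open subgroup `M` missing an element of `N`. The images of the
fibres in the finite set `G ⧸ M` are translates of each other and vary locally constantly, so one
can choose one `M`-coset from each, locally constantly and compatibly with `f`; this shrinks `Γ` to
fibres that are cosets of `N ⊓ M`, contradicting minimality. Hence `N = ⊥`, and `Γ` is a closed
graph with compact target, i.e. the graph of a continuous extension.
-/

universe u

open CategoryTheory Simplicial Limits

/-- `EG`, the simplicial profinite set with `(EG)_n = G^{n+1}`: the Čech nerve in `Profinite`
of the unique map from `G` to the terminal object. -/
noncomputable def profiniteEG (G : Profinite.{u}) : SimplicialObject Profinite.{u} :=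
  (Arrow.mk (terminal.from G)).cechNerve

universe v w

open Set
open scoped Pointwise Function
open Function (Injective)
open OrderDual (toDual ofDual)

lemma continuous_of_isClosed_graphOn_univ {X Y : Type*} [TopologicalSpace X] [TopologicalSpace Y]
    [CompactSpace Y] {g : X → Y} (hg : IsClosed (univ.graphOn g)) : Continuous g := by
  refine continuous_iff_isClosed.mpr fun C hC => ?_
  have hpre : g ⁻¹' C = Prod.fst '' (univ.graphOn g ∩ Prod.snd ⁻¹' C) := by
    ext x
    constructor
    · exact fun hx => ⟨(x, g x), ⟨by simp, hx⟩, rfl⟩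
    · rintro ⟨p, ⟨hp, hpC⟩, rfl⟩
      rw [mem_graphOn] at hp
      rw [mem_preimage, hp.2]
      exact hpC
  rw [hpre]
  exact isClosedMap_fst_of_compactSpace _ (hg.inter (hC.preimage continuous_snd))

lemma isLocallyConstant_of_isClosed_setOf_mem_of_ncard_eq {X ι : Type*} [TopologicalSpace X]
    [Finite ι] {T : X → Set ι} (hT : ∀ i, IsClosed {x | i ∈ T x})
    (hcard : ∀ x y, (T x).ncard = (T y).ncard) : IsLocallyConstant T := by
  refine (IsLocallyConstant.iff_exists_open T).mpr fun x =>
    ⟨⋂ i ∈ (T x)ᶜ, {y | i ∈ T y}ᶜ, (toFinite _).isOpen_biInter fun i _ => (hT i).isOpen_compl,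
      mem_iInter₂.mpr fun _ hi => hi, fun y hy => ?_⟩
  have hsub : T y ⊆ T x := fun i hiy => by_contra fun hix => mem_iInter₂.mp hy i hix hiy
  exact eq_of_subset_of_ncard_le hsub (hcard x y).le (toFinite _)

section Profinite

variable {X ι : Type*} [TopologicalSpace X] [CompactSpace X] [T2Space X]
  [TotallyDisconnectedSpace X] [Finite ι] {F : ι → Set X}

lemma exists_isLocallyConstant_eq_of_mem [Nonempty ι] (hF : ∀ i, IsClosed (F i))
    (hdisj : Pairwise (Disjoint on F)) :
    ∃ ψ : X → ι, IsLocallyConstant ψ ∧ ∀ i, ∀ x ∈ F i, ψ x = i := by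
  obtain ⟨C, hC, hFC, -, hcover, hCdisj⟩ := exists_clopen_partition_of_clopen_cover hF
    (fun _ => isClopen_univ) (fun _ => subset_univ _) (hdisj.set_pairwise univ)
  choose ψ hψ using fun x =>
    mem_iUnion.mp (hcover (mem_iUnion.mpr ⟨Classical.arbitrary ι, mem_univ x⟩))
  have hψ_eq : ∀ i, ∀ x ∈ C i, ψ x = i := fun i x hx =>
    by_contra fun hne => disjoint_left.mp (hCdisj (mem_univ _) (mem_univ _) hne) (hψ x) hx
  refine ⟨ψ, (IsLocallyConstant.iff_exists_open ψ).mpr fun x =>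
    ⟨C (ψ x), (hC _).isOpen, hψ x, fun y hy => hψ_eq _ y hy⟩, fun i x hx => hψ_eq i x (hFC i hx)⟩

lemma IsLocallyConstant.exists_isLocallyConstant_selection [Nonempty ι] {T : X → Set ι}
    (hT : IsLocallyConstant T) (hTne : ∀ x, (T x).Nonempty) (hF : ∀ i, IsClosed (F i))
    (hdisj : Pairwise (Disjoint on F)) (hFT : ∀ i, ∀ x ∈ F i, i ∈ T x) :
    ∃ c : X → ι, IsLocallyConstant c ∧ (∀ x, c x ∈ T x) ∧ ∀ i, ∀ x ∈ F i, c x = i := by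
  classical
  obtain ⟨ψ, hψ, hψF⟩ := exists_isLocallyConstant_eq_of_mem hF hdisj
  let select : Set ι → ι → ι := fun S i =>
    if i ∈ S then i else if h : S.Nonempty then h.some else i
  refine ⟨fun x => select (T x) (ψ x), hT.comp₂ hψ select, fun x => ?_, fun i x hx => ?_⟩
  · by_cases hx : ψ x ∈ T x
    · simp [select, hx]
    · simpa [select, hx, hTne x] using (hTne x).some_mem
  · simp [select, hψF i x hx, hFT i x hx]

end Profinite

lemma exists_openSubgroup_notMem {G : Type*} [Group G] [TopologicalSpace G]
    [IsTopologicalGroup G] [CompactSpace G] [TotallyDisconnectedSpace G] {n : G} (hn : n ≠ 1) :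
    ∃ M : OpenSubgroup G, n ∉ M := by
  obtain ⟨M, hM⟩ := ProfiniteGrp.exist_openNormalSubgroup_sub_open_nhds_of_one
    (isOpen_compl_singleton (x := n)) hn.symm
  exact ⟨M.toOpenSubgroup, fun hnM => hM hnM rfl⟩

section CosetExtension

variable {A B G : Type*} [TopologicalSpace B] [TopologicalSpace G] [Group G]

structure IsCosetExtension (j : A → B) (f : A → G) (N : Subgroup G) (Γ : Set (B × G)) : Prop where
  isClosed_subgroup : IsClosed (N : Set G)
  isClosed : IsClosed Γ
  exists_fiber_eq : ∀ b, ∃ x : G, Prod.mk b ⁻¹' Γ = x • (N : Set G)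
  mem_of_graph : ∀ a, (j a, f a) ∈ Γ

namespace IsCosetExtension

variable {j : A → B} {f : A → G} {N : Subgroup G} {Γ : Set (B × G)}

lemma top : IsCosetExtension j f ⊤ univ :=
  ⟨by simp, isClosed_univ, fun _ => ⟨1, by simp⟩, fun _ => trivial⟩

lemma fiber_nonempty (h : IsCosetExtension j f N Γ) (b : B) : (Prod.mk b ⁻¹' Γ).Nonempty := by
  obtain ⟨x, hx⟩ := h.exists_fiber_eq b
  exact ⟨x, by simp [hx, mem_leftCoset_iff]⟩

lemma fiber_eq_of_mem (h : IsCosetExtension j f N Γ) {b : B} {x : G} (hx : (b, x) ∈ Γ) :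
    Prod.mk b ⁻¹' Γ = x • (N : Set G) := by
  obtain ⟨y, hy⟩ := h.exists_fiber_eq b
  have hxy : x ∈ y • (N : Set G) := hy ▸ hx
  rw [hy, leftCoset_eq_iff]
  exact (mem_leftCoset_iff y).mp hxy

lemma iInter [CompactSpace G] {ι : Type*} [Nonempty ι] {N : ι → Subgroup G}
    {Γ : ι → Set (B × G)} (h : ∀ i, IsCosetExtension j f (N i) (Γ i))
    (hΓ : Directed (· ⊇ ·) Γ) : IsCosetExtension j f (⨅ i, N i) (⋂ i, Γ i) where
  isClosed_subgroup := by
    rw [Subgroup.coe_iInf]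
    exact isClosed_iInter fun i => (h i).isClosed_subgroup
  isClosed := isClosed_iInter fun i => (h i).isClosed
  exists_fiber_eq b := by
    have hclosed : ∀ i, IsClosed (Prod.mk b ⁻¹' Γ i) :=
      fun i => (h i).isClosed.preimage (Continuous.prodMk_right b)
    obtain ⟨x, hx⟩ := IsCompact.nonempty_iInter_of_directed_nonempty_isCompact_isClosed _
      (hΓ.mono_comp _ fun _ _ hst => preimage_mono hst) (fun i => (h i).fiber_nonempty b)
      (fun i => (hclosed i).isCompact) hclosed
    refine ⟨x, ?_⟩
    rw [preimage_iInter, Subgroup.coe_iInf, smul_set_iInter]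
    exact iInter_congr fun i => (h i).fiber_eq_of_mem (mem_iInter.mp hx i)
  mem_of_graph a := mem_iInter.mpr fun i => (h i).mem_of_graph a

lemma exists_minimal [CompactSpace G] :
    ∃ p : Subgroup G × Set (B × G), Minimal (fun p => IsCosetExtension j f p.1 p.2) p := by
  obtain ⟨m, hm⟩ := zorn_le₀
    ({p | IsCosetExtension j f (ofDual p).1 (ofDual p).2} : Set (Subgroup G × Set (B × G))ᵒᵈ)
    fun c hc hchain => by
      rcases c.eq_empty_or_nonempty with rfl | hne
      · exact ⟨toDual (⊤, univ), top, by simp⟩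
      have : Nonempty c := hne.to_subtype
      refine ⟨toDual (⨅ p : c, (ofDual p.1).1, ⋂ p : c, (ofDual p.1).2),
        iInter (fun p => hc p.2) fun p q => ?_, fun p hp =>
          ⟨iInf_le (fun p : c => (ofDual p.1).1) ⟨p, hp⟩,
            iInter_subset (fun p : c => (ofDual p.1).2) ⟨p, hp⟩⟩⟩
      rcases hchain.total p.2 q.2 with hpq | hqp
      · exact ⟨q, hpq.2, subset_rfl⟩
      · exact ⟨p, subset_rfl, hqp.2⟩
  exact ⟨ofDual m, hm⟩

lemma exists_continuous_of_bot [CompactSpace G] (h : IsCosetExtension j f ⊥ Γ) :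
    ∃ g : B → G, Continuous g ∧ ∀ a, g (j a) = f a := by
  choose g hg using h.fiber_nonempty
  have hΓ : ∀ b x, (b, x) ∈ Γ ↔ g b = x := fun b x => by
    rw [← mem_preimage (f := Prod.mk b), h.fiber_eq_of_mem (hg b)]
    simp [eq_comm]
  refine ⟨g, continuous_of_isClosed_graphOn_univ ?_, fun a => (hΓ _ _).mp (h.mem_of_graph a)⟩
  convert h.isClosed using 1
  ext ⟨b, x⟩
  simp [hΓ]

variable [CompactSpace G] [IsTopologicalGroup G]

lemma isLocallyConstant_image_fiber (h : IsCosetExtension j f N Γ) (M : OpenSubgroup G) :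
    IsLocallyConstant fun b => ((↑) : G → G ⧸ M.toSubgroup) '' (Prod.mk b ⁻¹' Γ) := by
  refine isLocallyConstant_of_isClosed_setOf_mem_of_ncard_eq (fun q => ?_) fun b₁ b₂ => ?_
  · have hset : {b | q ∈ ((↑) : G → G ⧸ M.toSubgroup) '' (Prod.mk b ⁻¹' Γ)} =
        Prod.fst '' (Γ ∩ Prod.snd ⁻¹' ((↑) ⁻¹' {q})) := by
      ext b
      constructor
      · rintro ⟨x, hx, rfl⟩
        exact ⟨(b, x), ⟨hx, rfl⟩, rfl⟩
      · rintro ⟨⟨b, x⟩, ⟨hx, rfl⟩, rfl⟩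
        exact ⟨x, hx, rfl⟩
    rw [hset]
    exact isClosedMap_fst_of_compactSpace _ (h.isClosed.inter ((isClosed_discrete _).preimage
      (QuotientGroup.continuous_mk.comp continuous_snd)))
  · have hcard : ∀ b, (((↑) : G → G ⧸ M.toSubgroup) '' (Prod.mk b ⁻¹' Γ)).ncard =
        (((↑) : G → G ⧸ M.toSubgroup) '' (N : Set G)).ncard := fun b => by
      obtain ⟨x, hx⟩ := h.exists_fiber_eq b
      rw [hx, image_smul_comm ((↑) : G → G ⧸ M.toSubgroup) x _ fun _ => rfl, ncard_smul_set]
    rw [hcard, hcard]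

lemma exists_subset_inf [TopologicalSpace A] [CompactSpace A] [CompactSpace B] [T2Space B]
    [TotallyDisconnectedSpace B] (hj : Continuous j) (hj_inj : Injective j) (hf : Continuous f)
    (h : IsCosetExtension j f N Γ) (M : OpenSubgroup G) :
    ∃ Γ' ⊆ Γ, IsCosetExtension j f (N ⊓ M.toSubgroup) Γ' := by
  let π : G → G ⧸ M.toSubgroup := (↑)
  have hπ : Continuous π := QuotientGroup.continuous_mk
  let F : G ⧸ M.toSubgroup → Set B := fun q => j '' (f ⁻¹' (π ⁻¹' {q}))
  have hF : ∀ q, IsClosed (F q) := fun q =>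
    (((isClosed_discrete {q}).preimage (hπ.comp hf)).isCompact.image hj).isClosed
  have hdisj : Pairwise (Disjoint on F) := fun q q' hqq' => disjoint_left.mpr <| by
    rintro _ ⟨a, rfl, rfl⟩ ⟨a', rfl, hja⟩
    exact hqq' (congrArg (π ∘ f) (hj_inj hja.symm))
  obtain ⟨c, hc, hcT, hcF⟩ := (h.isLocallyConstant_image_fiber M).exists_isLocallyConstant_selection
    (fun b => (h.fiber_nonempty b).image _) hF hdisj
    (by rintro q _ ⟨a, rfl, rfl⟩; exact ⟨f a, h.mem_of_graph a, rfl⟩)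
  refine ⟨Γ ∩ {p | π p.2 = c p.1}, inter_subset_left, ⟨?_, ?_, fun b => ?_,
    fun a => ⟨h.mem_of_graph a, (hcF _ _ ⟨a, rfl, rfl⟩).symm⟩⟩⟩
  · rw [Subgroup.coe_inf]
    exact h.isClosed_subgroup.inter M.isClosed
  · exact h.isClosed.inter
      (isClosed_eq (hπ.comp continuous_snd) (hc.continuous.comp continuous_fst))
  · obtain ⟨y, hy, hyc⟩ := hcT b
    refine ⟨y, ?_⟩
    rw [preimage_inter, h.fiber_eq_of_mem hy, Subgroup.coe_inf, smul_set_inter]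
    congr 1
    ext x
    simp [π, ← hyc, mem_leftCoset_iff, QuotientGroup.eq, eq_comm]

lemma eq_bot_of_minimal [TopologicalSpace A] [CompactSpace A] [CompactSpace B] [T2Space B]
    [TotallyDisconnectedSpace B] [TotallyDisconnectedSpace G] (hj : Continuous j)
    (hj_inj : Injective j) (hf : Continuous f)
    (hmin : Minimal (fun p => IsCosetExtension j f p.1 p.2) (N, Γ)) : N = ⊥ := by
  refine (Subgroup.eq_bot_iff_forall N).mpr fun n hn => by_contra fun hn1 => ?_
  obtain ⟨M, hnM⟩ := exists_openSubgroup_notMem hn1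
  obtain ⟨Γ', hΓ', hext⟩ := hmin.prop.exists_subset_inf hj hj_inj hf M
  have hle : N ≤ N ⊓ M.toSubgroup :=
    (hmin.le_of_le (y := (N ⊓ M.toSubgroup, Γ')) hext ⟨inf_le_left, hΓ'⟩).1
  exact hnM (hle hn).2

end IsCosetExtension

theorem exists_continuous_extend_of_injective [TopologicalSpace A] [CompactSpace A]
    [CompactSpace B] [T2Space B] [TotallyDisconnectedSpace B] [CompactSpace G]
    [IsTopologicalGroup G] [TotallyDisconnectedSpace G] {j : A → B} {f : A → G}
    (hj : Continuous j) (hj_inj : Injective j) (hf : Continuous f) :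
    ∃ g : B → G, Continuous g ∧ ∀ a, g (j a) = f a := by
  obtain ⟨⟨N, Γ⟩, hmin⟩ := IsCosetExtension.exists_minimal (j := j) (f := f)
  obtain rfl := IsCosetExtension.eq_bot_of_minimal hj hj_inj hf hmin
  exact hmin.prop.exists_continuous_of_bot

end CosetExtension

namespace CategoryTheory.Arrow

variable {C : Type w} [Category.{v} C]

section
variable (f : Arrow C)
  [∀ n : ℕ, HasWidePullback.{0} f.right (fun _ : Fin (n + 1) => f.left) fun _ => f.hom]

lemma cechNerve_map_const_π (n : SimplexCategory) (i : Fin (n.len + 1)) :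
    f.cechNerve.map (SimplexCategory.const ⦋0⦌ n i).op ≫ WidePullback.π _ 0 =
      WidePullback.π _ i :=
  WidePullback.lift_π _ _ _ _ _

lemma app_π_eq_map_const_app_zero_π {X : SimplicialObject C} (φ : X ⟶ f.cechNerve)
    (n : SimplexCategoryᵒᵖ) (i : Fin (n.unop.len + 1)) :
    φ.app n ≫ WidePullback.π _ i =
      X.map (SimplexCategory.const ⦋0⦌ n.unop i).op ≫ φ.app (.op ⦋0⦌) ≫ WidePullback.π _ 0 := by
  rw [φ.naturality_assoc, cechNerve_map_const_π]

lemma cechNerve_hom_ext {X : SimplicialObject C} {φ ψ : X ⟶ f.cechNerve}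
    (h : φ.app (.op ⦋0⦌) ≫ WidePullback.π _ 0 = ψ.app (.op ⦋0⦌) ≫ WidePullback.π _ 0) :
    φ = ψ := by
  ext n : 2
  apply WidePullback.hom_ext
  · intro i
    rw [app_π_eq_map_const_app_zero_π f φ n i, app_π_eq_map_const_app_zero_π f ψ n i, h]
  · rw [← WidePullback.π_arrow _ 0, ← Category.assoc, ← Category.assoc,
      app_π_eq_map_const_app_zero_π f φ n 0, app_π_eq_map_const_app_zero_π f ψ n 0, h]

end

variable [HasTerminal C] [HasFiniteWidePullbacks C] {G : C}

noncomputable def cechNerveTerminalFromLift {X : SimplicialObject C} (g : X _⦋0⦌ ⟶ G) :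
    X ⟶ (Arrow.mk (terminal.from G)).cechNerve where
  app n := WidePullback.lift (terminal.from _)
    (fun i => X.map (SimplexCategory.const ⦋0⦌ n.unop i).op ≫ g) (fun _ => terminal.hom_ext _ _)
  naturality m n φ := by
    apply WidePullback.hom_ext
    · intro i
      simp only [cechNerve_map, Category.assoc]
      rw [WidePullback.lift_π, WidePullback.lift_π, WidePullback.lift_π, ← X.map_comp_assoc]
      exact congr(X.map $(Quiver.Hom.unop_inj (SimplexCategory.const_comp _ _ _)) ≫ g)
    · apply terminal.hom_ext

lemma cechNerveTerminalFromLift_app_zero_π {X : SimplicialObject C} (g : X _⦋0⦌ ⟶ G) :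
    (cechNerveTerminalFromLift g).app (.op ⦋0⦌) ≫ WidePullback.π _ 0 = g := by
  rw [cechNerveTerminalFromLift, WidePullback.lift_π]
  simp

lemma hasLiftingProperty_terminalFrom_cechNerve {A B : SimplicialObject C} (j : A ⟶ B)
    (hext : ∀ f : A _⦋0⦌ ⟶ G, ∃ g : B _⦋0⦌ ⟶ G, j.app _ ≫ g = f) :
    HasLiftingProperty j (terminal.from (Arrow.mk (terminal.from G)).cechNerve) where
  sq_hasLift {u _} _ := by
    obtain ⟨g, hg⟩ := hext (u.app _ ≫ WidePullback.π _ 0)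
    refine ⟨⟨⟨cechNerveTerminalFromLift g, cechNerve_hom_ext _ ?_, terminal.hom_ext _ _⟩⟩⟩
    rw [NatTrans.comp_app, Category.assoc, cechNerveTerminalFromLift_app_zero_π, hg]

end CategoryTheory.Arrow

/-- Let `G` be a profinite group and let `EG` be the simplicial profinite set
whose space of `n`-simplices is `G^{n+1}`, namely the Čech nerve in `Profinite` of the unique
map from `G` to the terminal object. Then the unique map `EG → *` to the terminal simplicial
profinite set has the right lifting property with respect to all monomorphisms of simplicial
profinite sets. -/
theorem profiniteEG_rlp_monomorphisms
    (G : Profinite.{u}) [Group G] [IsTopologicalGroup G]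
    (A B : SimplicialObject Profinite.{u}) (j : A ⟶ B) [Mono j] :
    HasLiftingProperty j (terminal.from (profiniteEG G)) := by
  refine Arrow.hasLiftingProperty_terminalFrom_cechNerve j fun f => ?_
  have hj_inj : Injective (j.app (.op ⦋0⦌)) :=
    (CompHausLike.mono_iff_injective _).mp inferInstance
  obtain ⟨g, hg, hgj⟩ := exists_continuous_extend_of_injective
    (j.app _).hom.hom.continuous hj_inj f.hom.hom.continuous
  exact ⟨CompHausLike.ofHom _ ⟨g, hg⟩, by ext a; exact hgj a⟩
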